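/- arXiv:1809.07390 — 3 statements merged into one kernel-verified Lean document; each statement's English description precedes it below -/
import Mathlib

section
/- Let n be even, let f be an s-plateaued Boolean function on 𝔽₂^k whose Walsh support S_f does not contain the zero vector, and let h₁,…,h_k be bent functions on 𝔽₂ⁿ such that for every ω ∈ S_f the function ω·(h₁,…,h_k) is bent on 𝔽₂ⁿ and its dual satisfies (ω·(h₁,…,h_k))* = ω·(h₁*,…,h_k*). Then: (i) 𝔣(x) = f(h₁(x),…,h_k(x)) is a bent function on 𝔽₂ⁿ and its dual is 𝔣*(x) = f(h₁*(x),…,h_k*(x)); (ii) if moreover h_i* = h_i for every i (each h_i is self-dual bent), then 𝔣 is self-dual bent, i.e. 𝔣* = 𝔣. -/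
open Finset

def dotp {ι : Type*} [Fintype ι] (a b : ι → ZMod 2) : ZMod 2 := ∑ i, a i * b i

def WHT {ι : Type*} [Fintype ι] [DecidableEq ι]
    (f : (ι → ZMod 2) → ZMod 2) (ω : ι → ZMod 2) : ℤ :=
  ∑ x : ι → ZMod 2, (-1 : ℤ) ^ ((f x + dotp ω x).val)

def IsBent {ι : Type*} [Fintype ι] [DecidableEq ι] (f : (ι → ZMod 2) → ZMod 2) : Prop :=
  ∀ ω, |WHT f ω| = 2 ^ (Fintype.card ι / 2)

def IsDualBent {ι : Type*} [Fintype ι] [DecidableEq ι] (f g : (ι → ZMod 2) → ZMod 2) : Prop :=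
  ∀ ω, WHT f ω = 2 ^ (Fintype.card ι / 2) * (-1 : ℤ) ^ ((g ω).val)

def IsPlateaued {ι : Type*} [Fintype ι] [DecidableEq ι] (s : ℕ) (f : (ι → ZMod 2) → ZMod 2) : Prop :=
  ∀ ω, WHT f ω = 0 ∨ WHT f ω = 2 ^ ((Fintype.card ι + s) / 2) ∨
    WHT f ω = -(2 ^ ((Fintype.card ι + s) / 2))

def WSupport {ι : Type*} [Fintype ι] [DecidableEq ι] (f : (ι → ZMod 2) → ZMod 2) : Set (ι → ZMod 2) :=
  {ω | WHT f ω ≠ 0}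


def sgn (a : ZMod 2) : ℤ := (-1) ^ a.val

lemma sgn_add (a b : ZMod 2) : sgn (a + b) = sgn a * sgn b := by revert a b; decide

lemma abs_sgn (a : ZMod 2) : |sgn a| = 1 := by revert a; decide

lemma dotp_add_right {ι : Type*} [Fintype ι] (w x y : ι → ZMod 2) :
    dotp w x + dotp w y = dotp w (x + y) := by
  simp [dotp, mul_add, Finset.sum_add_distrib]

lemma dotp_add_left {ι : Type*} [Fintype ι] (a b z : ι → ZMod 2) :
    dotp (a + b) z = dotp a z + dotp b z := by
  simp [dotp, add_mul, Finset.sum_add_distrib]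

lemma dotp_single {ι : Type*} [Fintype ι] [DecidableEq ι] (j : ι) (z : ι → ZMod 2) :
    dotp (Pi.single j 1) z = z j := by
  simp [dotp, Pi.single_apply, ite_mul]

lemma WHT_eq {ι : Type*} [Fintype ι] [DecidableEq ι]
    (g : (ι → ZMod 2) → ZMod 2) (ω : ι → ZMod 2) :
    WHT g ω = ∑ x : ι → ZMod 2, sgn (g x) * sgn (dotp ω x) := by
  unfold WHT
  exact Finset.sum_congr rfl fun x _ => sgn_add _ _

lemma sum_sgn_dotp {ι : Type*} [Fintype ι] [DecidableEq ι] (z : ι → ZMod 2) :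
    ∑ ω : ι → ZMod 2, sgn (dotp ω z) = if z = 0 then 2 ^ Fintype.card ι else 0 := by
  by_cases hz : z = 0
  · subst hz
    have h1 : ∀ ω : ι → ZMod 2, sgn (dotp ω 0) = 1 := by
      intro ω; simp [dotp, sgn]
    simp only [h1, if_pos rfl, Finset.sum_const, Finset.card_univ, smul_eq_mul, mul_one]
    simp [Fintype.card_fun]
  · rw [if_neg hz]
    obtain ⟨j, hj⟩ : ∃ j, z j ≠ 0 := by
      by_contra hc
      push_neg at hc
      exact hz (funext fun i => hc i)
    have hz1 : z j = 1 := by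
      have : ∀ a : ZMod 2, a ≠ 0 → a = 1 := by decide
      exact this _ hj
    apply Finset.sum_ninvolution (fun ω => ω + Pi.single j 1)
    · intro ω
      rw [dotp_add_left, dotp_single, hz1, sgn_add]
      have h1 : sgn 1 = -1 := by decide
      rw [h1]; ring
    · intro ω _ hcontra
      have := congrFun hcontra j
      simp [Pi.single_apply] at this
    · intro ω; exact Finset.mem_univ _
    · intro ω
      funext i
      by_cases hi : i = j
      · subst hi
        have h2 : ∀ a : ZMod 2, a + 1 + 1 = a := by decide
        simp [Pi.single_apply, h2]
      · simp [Pi.single_apply, hi]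

lemma inv_WHT {ι : Type*} [Fintype ι] [DecidableEq ι]
    (g : (ι → ZMod 2) → ZMod 2) (y : ι → ZMod 2) :
    ∑ ω : ι → ZMod 2, WHT g ω * sgn (dotp ω y) = 2 ^ Fintype.card ι * sgn (g y) := by
  have addid : ∀ x y : ι → ZMod 2, x + y = 0 ↔ x = y := by
    intro x y
    constructor
    · intro hxy
      funext i
      have h1 : x i + y i = 0 := by simpa using congrFun hxy i
      revert h1
      generalize x i = a; generalize y i = b
      revert a b; decide
    · rintro rfl
      funext i
      have h2 : ∀ a : ZMod 2, a + a = 0 := by decide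
      exact h2 _
  calc ∑ ω : ι → ZMod 2, WHT g ω * sgn (dotp ω y)
      = ∑ ω : ι → ZMod 2, ∑ x : ι → ZMod 2, sgn (g x) * sgn (dotp ω (x + y)) := by
        refine Finset.sum_congr rfl fun ω _ => ?_
        rw [WHT_eq, Finset.sum_mul]
        refine Finset.sum_congr rfl fun x _ => ?_
        rw [← dotp_add_right, sgn_add, mul_assoc]
    _ = ∑ x : ι → ZMod 2, sgn (g x) * ∑ ω : ι → ZMod 2, sgn (dotp ω (x + y)) := by
        rw [Finset.sum_comm]
        exact Finset.sum_congr rfl fun x _ => (Finset.mul_sum _ _ _).symm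
    _ = ∑ x : ι → ZMod 2, sgn (g x) * (if x = y then (2:ℤ) ^ Fintype.card ι else 0) := by
        refine Finset.sum_congr rfl fun x _ => ?_
        rw [sum_sgn_dotp]
        congr 1
        simp [addid]
    _ = 2 ^ Fintype.card ι * sgn (g y) := by
        rw [Finset.sum_eq_single y]
        · rw [if_pos rfl]; ring
        · intro b _ hb; rw [if_neg hb, mul_zero]
        · intro hy; exact absurd (Finset.mem_univ y) hy

/-- with `f` an `s`-plateaued function on `𝔽₂^k` whose Walsh support
avoids `0`, and `h₁,…,h_k` bent on `𝔽₂^n` (duals `h₁*,…,h_k*`) such that for every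
`ω ∈ S_f` the function `ω·(h₁,…,h_k)` is bent with dual `ω·(h₁*,…,h_k*)`, the
function `𝔣 = f(h₁,…,h_k)` is bent with dual `𝔣* = f(h₁*,…,h_k*)`; and if each
`h_i` is self-dual then `𝔣` is self-dual bent. -/
theorem stmt14 {n k s : ℕ} (hne : Even n)
    (f : (Fin k → ZMod 2) → ZMod 2) (hf : IsPlateaued s f)
    (h0 : WHT f 0 = 0)
    (h hdual : Fin k → (Fin n → ZMod 2) → ZMod 2)
    (hhb : ∀ i, IsDualBent (h i) (hdual i))
    (hbent : ∀ w : Fin k → ZMod 2, WHT f w ≠ 0 →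
      IsDualBent (fun x => dotp w (fun i => h i x))
        (fun x => dotp w (fun i => hdual i x))) :
    (IsBent (fun x : Fin n → ZMod 2 => f (fun i => h i x)) ∧
      IsDualBent (fun x : Fin n → ZMod 2 => f (fun i => h i x))
        (fun x => f (fun i => hdual i x))) ∧
    ((∀ i, hdual i = h i) →
      IsDualBent (fun x : Fin n → ZMod 2 => f (fun i => h i x))
        (fun x => f (fun i => h i x))) := by
  have key : ∀ ω : Fin n → ZMod 2,
      WHT (fun x : Fin n → ZMod 2 => f (fun i => h i x)) ω
        = 2 ^ (n / 2) * sgn (f (fun i => hdual i ω)) := by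
    intro ω
    have hcancel : ((2:ℤ) ^ k) ≠ 0 := pow_ne_zero _ (by norm_num)
    apply mul_left_cancel₀ hcancel
    calc (2:ℤ) ^ k * WHT (fun x : Fin n → ZMod 2 => f (fun i => h i x)) ω
        = ∑ x : Fin n → ZMod 2,
            ((2:ℤ) ^ k * sgn (f (fun i => h i x))) * sgn (dotp ω x) := by
          rw [WHT_eq, Finset.mul_sum]
          exact Finset.sum_congr rfl fun x _ => by ring
      _ = ∑ x : Fin n → ZMod 2,
            (∑ w : Fin k → ZMod 2, WHT f w * sgn (dotp w (fun i => h i x))) * sgn (dotp ω x) := by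
          refine Finset.sum_congr rfl fun x _ => ?_
          rw [inv_WHT f (fun i => h i x)]
          simp [Fintype.card_fin]
      _ = ∑ w : Fin k → ZMod 2, WHT f w *
            ∑ x : Fin n → ZMod 2, sgn (dotp w (fun i => h i x)) * sgn (dotp ω x) := by
          simp_rw [Finset.sum_mul, Finset.mul_sum]
          rw [Finset.sum_comm]
          exact Finset.sum_congr rfl fun w _ => Finset.sum_congr rfl fun x _ => by ring
      _ = ∑ w : Fin k → ZMod 2, WHT f w *
            WHT (fun x => dotp w (fun i => h i x)) ω := by
          refine Finset.sum_congr rfl fun w _ => ?_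
          rw [WHT_eq (fun x => dotp w (fun i => h i x)) ω]
      _ = ∑ w : Fin k → ZMod 2, WHT f w *
            (2 ^ (n / 2) * sgn (dotp w (fun i => hdual i ω))) := by
          refine Finset.sum_congr rfl fun w _ => ?_
          by_cases hw : WHT f w = 0
          · rw [hw, zero_mul, zero_mul]
          · rw [hbent w hw ω]
            simp [Fintype.card_fin, sgn]
      _ = 2 ^ (n / 2) * ∑ w : Fin k → ZMod 2, WHT f w * sgn (dotp w (fun i => hdual i ω)) := by
          rw [Finset.mul_sum]
          exact Finset.sum_congr rfl fun w _ => by ring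
      _ = 2 ^ (n / 2) * ((2:ℤ) ^ k * sgn (f (fun i => hdual i ω))) := by
          rw [inv_WHT f (fun i => hdual i ω)]
          simp [Fintype.card_fin]
      _ = (2:ℤ) ^ k * (2 ^ (n / 2) * sgn (f (fun i => hdual i ω))) := by ring
  have hdb : IsDualBent (fun x : Fin n → ZMod 2 => f (fun i => h i x))
      (fun x => f (fun i => hdual i x)) := by
    intro ω
    rw [key ω]
    simp [Fintype.card_fin, sgn]
  refine ⟨⟨?_, hdb⟩, ?_⟩
  · intro ω
    rw [hdb ω, abs_mul, Fintype.card_fin]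
    have h1 : |(-1 : ℤ) ^ ((f fun i => hdual i ω).val)| = 1 := abs_sgn _
    rw [h1, mul_one, abs_pow]
    norm_num
  · intro hd ω
    have := hdb ω
    simpa only [hd] using this
end

section
/- Let n be even, let U ⊆ 𝔽₂^k be a linear subspace of dimension τ with 0 ≤ τ ≤ k−2, and let a, h₁,…,h_k be Boolean functions on 𝔽₂ⁿ such that a ⊕ ω·(h₁,…,h_k) is a bent function on 𝔽₂ⁿ for every ω ∈ U^⊥. If for every v ∈ 𝔽₂ⁿ the integer ∑_{ω∈U^⊥} (−1)^{(a ⊕ ω·(h₁,…,h_k))*(v)} is divisible by 2^{k−τ}, then 𝔣(x) = a(x) ⊕ φ_U(h₁(x),…,h_k(x)) is a bent function on 𝔽₂ⁿ. -/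
open Finset

/-!
Write `𝔣 = a + 1_U ∘ h`. Flipping the sign of the Walsh sum on `h⁻¹(U)` gives
`W_𝔣(v) = W_a(v) - 2 S(v)`, where `S(v)` is the Walsh sum of `a` restricted to `h⁻¹(U)`.
Expanding `|U^⊥| 1_U(z) = ∑_{w ∈ U^⊥} (-1)^{w·z}` turns `|U^⊥| S(v)` into
`∑_{w ∈ U^⊥} W_{a + w·h}(v) = 2^{n/2} ∑_{w ∈ U^⊥} (-1)^{(a + w·h)*(v)}`, so the divisibility
hypothesis makes `S(v)` a multiple of `2^{n/2}`, and `W_𝔣(v) = 2^{n/2} (±1 - 2q)` is an odd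
multiple of `2^{n/2}`. Parseval's identity then forces every odd cofactor to be `±1`.
-/

open Matrix Module

section Orthogonal

variable {K κ : Type*} [Field K] [Fintype κ] [DecidableEq κ]

def dotOrthogonal (U : Submodule K (κ → K)) : Submodule K (κ → K) :=
  U.dualAnnihilator.comap (dotProductEquiv K κ).toLinearMap

theorem mem_dotOrthogonal {U : Submodule K (κ → K)} {w : κ → K} :
    w ∈ dotOrthogonal U ↔ ∀ u ∈ U, u ⬝ᵥ w = 0 := by
  simp [dotOrthogonal, Submodule.mem_dualAnnihilator, dotProduct_comm]

theorem forall_mem_dotOrthogonal_dotProduct_eq_zero_iff {U : Submodule K (κ → K)} {z : κ → K} :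
    (∀ w ∈ dotOrthogonal U, w ⬝ᵥ z = 0) ↔ z ∈ U := by
  rw [← Subspace.forall_mem_dualAnnihilator_apply_eq_zero_iff,
    ← (dotProductEquiv K κ).toEquiv.forall_congr_right]
  simp [dotOrthogonal]

theorem finrank_dotOrthogonal (U : Submodule K (κ → K)) :
    finrank K (dotOrthogonal U) = Fintype.card κ - finrank K U := by
  have h := Subspace.finrank_add_finrank_dualAnnihilator_eq U
  rw [finrank_fintype_fun_eq_card] at h
  rw [dotOrthogonal, Submodule.comap_equiv_eq_map_symm, LinearEquiv.finrank_map_eq]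
  omega

end Orthogonal

def signChar : AddChar (ZMod 2) ℤ where
  toFun x := (-1) ^ x.val
  map_zero_eq_one' := rfl
  map_add_eq_mul' := by decide

theorem signChar_apply (x : ZMod 2) : signChar x = (-1) ^ x.val := rfl

theorem signChar_eq_one_iff {x : ZMod 2} : signChar x = 1 ↔ x = 0 := by
  revert x; decide

theorem sum_signChar_comp_eq_ite {A : Type*} [AddGroup A] [Fintype A] (φ : A →+ ZMod 2) :
    ∑ a, signChar (φ a) = if ∀ a, φ a = 0 then (Fintype.card A : ℤ) else 0 := by
  classical
  rw [show ∑ a, signChar (φ a) = ∑ a, signChar.compAddMonoidHom φ a from rfl,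
    AddChar.sum_eq_ite]
  simp only [AddChar.eq_zero_iff, AddChar.compAddMonoidHom_apply, signChar_eq_one_iff]

theorem odd_signChar (x : ZMod 2) : Odd (signChar x) := by
  fin_cases x
  · exact odd_one
  · exact odd_neg_one

theorem dotp_eq_dotProduct {κ : Type*} [Fintype κ] (u w : κ → ZMod 2) : dotp u w = u ⬝ᵥ w := rfl

section CharacterSums

variable {κ : Type*} [Fintype κ] [DecidableEq κ]

theorem sum_signChar_dotProduct (z : κ → ZMod 2) :
    ∑ w : κ → ZMod 2, signChar (w ⬝ᵥ z) = if z = 0 then 2 ^ Fintype.card κ else 0 := by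
  have h := sum_signChar_comp_eq_ite (dotProductEquiv (ZMod 2) κ z).toAddMonoidHom
  simp only [LinearMap.toAddMonoidHom_coe, dotProductEquiv_apply_apply, dotProduct_eq_zero_iff,
    Fintype.card_fun, ZMod.card, Nat.cast_pow, Nat.cast_ofNat] at h
  simpa only [dotProduct_comm _ z] using h

open scoped Classical in
theorem sum_dotOrthogonal_signChar (U : Submodule (ZMod 2) (κ → ZMod 2)) (z : κ → ZMod 2) :
    ∑ w : dotOrthogonal U, signChar ((w : κ → ZMod 2) ⬝ᵥ z) =
      if z ∈ U then (Fintype.card (dotOrthogonal U) : ℤ) else 0 := by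
  have h := sum_signChar_comp_eq_ite
    ((dotProductEquiv (ZMod 2) κ z).comp (dotOrthogonal U).subtype).toAddMonoidHom
  simpa only [LinearMap.toAddMonoidHom_coe, LinearMap.coe_comp, Function.comp_apply,
    dotProductEquiv_apply_apply, Submodule.coe_subtype, Subtype.forall, dotProduct_comm z,
    forall_mem_dotOrthogonal_dotProduct_eq_zero_iff] using h

open scoped Classical in
theorem sum_filter_dotp_eq_sum_dotOrthogonal {M : Type*} [AddCommMonoid M]
    (U : Submodule (ZMod 2) (κ → ZMod 2)) (g : (κ → ZMod 2) → M) :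
    ∑ w ∈ Finset.univ.filter (fun w : κ → ZMod 2 => ∀ u ∈ U, dotp u w = 0), g w =
      ∑ w : dotOrthogonal U, g w := by
  refine Finset.sum_subtype (p := (· ∈ dotOrthogonal U)) _ (fun w => ?_) g
  rw [Finset.mem_filter, mem_dotOrthogonal]
  exact and_iff_right (Finset.mem_univ w)

theorem card_dotOrthogonal (U : Submodule (ZMod 2) (κ → ZMod 2)) [Fintype (dotOrthogonal U)] :
    Fintype.card (dotOrthogonal U) = 2 ^ (Fintype.card κ - finrank (ZMod 2) U) := by
  rw [Fintype.card_eq_nat_card, Module.natCard_eq_pow_finrank (K := ZMod 2),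
    finrank_dotOrthogonal, Nat.card_zmod]

end CharacterSums

theorem one_le_sq_of_odd {c : ℤ} (hc : Odd c) : 1 ≤ c ^ 2 := by
  rw [one_le_sq_iff_one_le_abs]
  exact Int.one_le_abs (by rintro rfl; exact Int.not_odd_zero hc)

section Walsh

variable {ι : Type*} [Fintype ι] [DecidableEq ι]

theorem WHT_eq_sum_signChar (f : (ι → ZMod 2) → ZMod 2) (ω : ι → ZMod 2) :
    WHT f ω = ∑ x, signChar (f x + ω ⬝ᵥ x) := rfl

theorem sum_WHT_sq (f : (ι → ZMod 2) → ZMod 2) :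
    ∑ ω, WHT f ω ^ 2 = 2 ^ (2 * Fintype.card ι) := by
  have hsq (ω : ι → ZMod 2) : WHT f ω ^ 2 =
      ∑ x, ∑ y, signChar (f x) * signChar (f y) * signChar (ω ⬝ᵥ (x + y)) := by
    rw [sq, WHT_eq_sum_signChar, Finset.sum_mul_sum]
    refine Finset.sum_congr rfl fun x _ => Finset.sum_congr rfl fun y _ => ?_
    simp only [dotProduct_add, AddChar.map_add_eq_mul]
    ring
  have hdiag (x : ι → ZMod 2) :
      ∑ y, signChar (f x) * signChar (f y) * (if x + y = 0 then 2 ^ Fintype.card ι else 0) =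
        (2 : ℤ) ^ Fintype.card ι := by
    simp only [mul_ite, mul_zero, ← ZModModule.sub_eq_add x, sub_eq_zero, Finset.sum_ite_eq,
      Finset.mem_univ, if_true, ← AddChar.map_add_eq_mul, ZModModule.add_self,
      AddChar.map_zero_eq_one, one_mul]
  calc ∑ ω, WHT f ω ^ 2
      = ∑ ω, ∑ x, ∑ y, signChar (f x) * signChar (f y) * signChar (ω ⬝ᵥ (x + y)) :=
        Finset.sum_congr rfl fun ω _ => hsq ω
    _ = ∑ x, ∑ y, signChar (f x) * signChar (f y) * ∑ ω, signChar (ω ⬝ᵥ (x + y)) := by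
        rw [Finset.sum_comm]
        refine Finset.sum_congr rfl fun x _ => ?_
        rw [Finset.sum_comm]
        simp only [Finset.mul_sum]
    _ = ∑ x : ι → ZMod 2, (2 : ℤ) ^ Fintype.card ι := by
        simp only [sum_signChar_dotProduct, hdiag]
    _ = 2 ^ (2 * Fintype.card ι) := by
        simp [two_mul, pow_add]

theorem isBent_of_forall_WHT_eq_mul_odd (f : (ι → ZMod 2) → ZMod 2) (hι : Even (Fintype.card ι))
    (hf : ∀ ω, ∃ c : ℤ, Odd c ∧ WHT f ω = 2 ^ (Fintype.card ι / 2) * c) : IsBent f := by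
  choose c hodd hc using hf
  set m := Fintype.card ι
  have hpow : ((2 : ℤ) ^ (m / 2)) ^ 2 = 2 ^ m := by
    rw [← pow_mul, Nat.div_mul_cancel hι.two_dvd]
  have hsum : ∑ ω, c ω ^ 2 = ∑ _ω : ι → ZMod 2, 1 := by
    have h := sum_WHT_sq f
    simp only [hc, mul_pow, hpow, ← Finset.mul_sum, two_mul, pow_add] at h
    rw [mul_left_cancel₀ (by positivity) h]
    simp
  have hsq : ∀ ω, c ω ^ 2 = 1 := fun ω =>
    ((Finset.sum_eq_sum_iff_of_le fun ω _ => one_le_sq_of_odd (hodd ω)).mp hsum.symm ω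
      (Finset.mem_univ ω)).symm
  intro ω
  rcases sq_eq_one_iff.mp (hsq ω) with h | h <;> simp [hc, h, m]

theorem WHT_add_indicator (f : (ι → ZMod 2) → ZMod 2) (P : (ι → ZMod 2) → Prop)
    [DecidablePred P] (ω : ι → ZMod 2) :
    WHT (fun x => f x + if P x then 1 else 0) ω =
      WHT f ω - 2 * ∑ x with P x, signChar (f x + ω ⬝ᵥ x) := by
  have hflip (x : ι → ZMod 2) : signChar (f x + (if P x then 1 else 0) + ω ⬝ᵥ x) =
      signChar (f x + ω ⬝ᵥ x) - 2 * if P x then signChar (f x + ω ⬝ᵥ x) else 0 := by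
    split_ifs
    · rw [add_right_comm, AddChar.map_add_eq_mul, signChar_apply 1, ZMod.val_one, pow_one]
      ring
    · ring_nf
  simp only [WHT_eq_sum_signChar, hflip, Finset.sum_sub_distrib, ← Finset.mul_sum,
    Finset.sum_filter]

open scoped Classical in
theorem card_dotOrthogonal_mul_sum_mem {κ : Type*} [Fintype κ] [DecidableEq κ]
    (f : (ι → ZMod 2) → ZMod 2) (h : κ → (ι → ZMod 2) → ZMod 2)
    (U : Submodule (ZMod 2) (κ → ZMod 2)) (ω : ι → ZMod 2) :
    (Fintype.card (dotOrthogonal U) : ℤ) *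
        ∑ x with (fun i => h i x) ∈ U, signChar (f x + ω ⬝ᵥ x) =
      ∑ w : dotOrthogonal U, WHT (fun x => f x + dotp w (fun i => h i x)) ω := by
  have hterm (x : ι → ZMod 2) :
      (Fintype.card (dotOrthogonal U) : ℤ) *
          (if (fun i => h i x) ∈ U then signChar (f x + ω ⬝ᵥ x) else 0) =
        ∑ w : dotOrthogonal U, signChar (f x + dotp w (fun i => h i x) + ω ⬝ᵥ x) := by
    calc (Fintype.card (dotOrthogonal U) : ℤ) *
          (if (fun i => h i x) ∈ U then signChar (f x + ω ⬝ᵥ x) else 0)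
        = signChar (f x + ω ⬝ᵥ x) *
            (if (fun i => h i x) ∈ U then (Fintype.card (dotOrthogonal U) : ℤ) else 0) := by
          split_ifs <;> ring
      _ = signChar (f x + ω ⬝ᵥ x) * ∑ w : dotOrthogonal U, signChar (w ⬝ᵥ fun i => h i x) := by
          rw [sum_dotOrthogonal_signChar]
      _ = _ := by
          rw [Finset.mul_sum]
          refine Finset.sum_congr rfl fun w _ => ?_
          rw [add_right_comm, AddChar.map_add_eq_mul _ (f x + _), dotp_eq_dotProduct, mul_comm]
  simp only [Finset.sum_filter, Finset.mul_sum, hterm, WHT_eq_sum_signChar]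
  exact Finset.sum_comm

end Walsh

open scoped Classical in
theorem stmt16_general {n k τ : ℕ} (hne : Even n)
    (U : Submodule (ZMod 2) (Fin k → ZMod 2))
    (hdim : Module.finrank (ZMod 2) U = τ)
    (a : (Fin n → ZMod 2) → ZMod 2) (h : Fin k → (Fin n → ZMod 2) → ZMod 2)
    (gdual : (Fin k → ZMod 2) → (Fin n → ZMod 2) → ZMod 2)
    (hbent : ∀ w : Fin k → ZMod 2, (∀ u ∈ U, dotp u w = 0) →
      IsDualBent (fun x => a x + dotp w (fun i => h i x)) (gdual w))
    (hdiv : ∀ v : Fin n → ZMod 2,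
      (2 ^ (k - τ) : ℤ) ∣
        ∑ w ∈ Finset.univ.filter (fun w : Fin k → ZMod 2 => ∀ u ∈ U, dotp u w = 0),
          (-1 : ℤ) ^ ((gdual w v).val)) :
    IsBent (fun x : Fin n → ZMod 2 =>
      a x + (if (fun i => h i x) ∈ U then (1 : ZMod 2) else 0)) := by
  refine isBent_of_forall_WHT_eq_mul_odd _ (by simpa using hne) fun v => ?_
  rw [Fintype.card_fin]
  have hwalsh (w : dotOrthogonal U) :
      WHT (fun x => a x + dotp w (fun i => h i x)) v = 2 ^ (n / 2) * signChar (gdual w v) := by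
    rw [signChar_apply]
    simpa using hbent w (mem_dotOrthogonal.mp w.2) v
  obtain ⟨q, hq⟩ := hdiv v
  rw [sum_filter_dotp_eq_sum_dotOrthogonal] at hq
  have hpartial : ∑ x with (fun i => h i x) ∈ U, signChar (a x + v ⬝ᵥ x) = 2 ^ (n / 2) * q := by
    apply mul_left_cancel₀ (a := (Fintype.card (dotOrthogonal U) : ℤ)) (by positivity)
    rw [card_dotOrthogonal_mul_sum_mem, Finset.sum_congr rfl fun w _ => hwalsh w,
      ← Finset.mul_sum]
    simp only [signChar_apply, hq, card_dotOrthogonal, hdim, Fintype.card_fin]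
    push_cast
    ring
  have hlinear : WHT a v = 2 ^ (n / 2) * signChar (gdual 0 v) := by
    simpa [dotp_eq_dotProduct] using hwalsh 0
  refine ⟨signChar (gdual 0 v) - 2 * q, (odd_signChar _).sub_even (even_two_mul q), ?_⟩
  rw [WHT_add_indicator, hpartial, hlinear]
  ring

open scoped Classical in
/-- with `U ⊆ 𝔽₂^k` a subspace of dimension `τ ≤ k-2`, `a ⊕ ω·(h₁,…,h_k)`
bent on `𝔽₂^n` (dual `(a ⊕ ω·(h₁,…,h_k))*`) for every `ω ∈ U^⊥`, and
`2^(k-τ) ∣ ∑_{ω∈U^⊥} (-1)^((a ⊕ ω·(h₁,…,h_k))*(v))` for every `v`, the function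
`𝔣(x) = a(x) ⊕ φ_U(h₁(x),…,h_k(x))` is bent on `𝔽₂^n`. -/
theorem stmt16 {n k τ : ℕ} (hne : Even n) (hτ : τ + 2 ≤ k)
    (U : Submodule (ZMod 2) (Fin k → ZMod 2))
    (hdim : Module.finrank (ZMod 2) U = τ)
    (a : (Fin n → ZMod 2) → ZMod 2) (h : Fin k → (Fin n → ZMod 2) → ZMod 2)
    (gdual : (Fin k → ZMod 2) → (Fin n → ZMod 2) → ZMod 2)
    (hbent : ∀ w : Fin k → ZMod 2, (∀ u ∈ U, dotp u w = 0) →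
      IsDualBent (fun x => a x + dotp w (fun i => h i x)) (gdual w))
    (hdiv : ∀ v : Fin n → ZMod 2,
      (2 ^ (k - τ) : ℤ) ∣
        ∑ w ∈ Finset.univ.filter (fun w : Fin k → ZMod 2 => ∀ u ∈ U, dotp u w = 0),
          (-1 : ℤ) ^ ((gdual w v).val)) :
    IsBent (fun x : Fin n → ZMod 2 =>
      a x + (if (fun i => h i x) ∈ U then (1 : ZMod 2) else 0)) :=
  stmt16_general hne U hdim a h gdual hbent hdiv
end

section
/- Let n be even, let r ≥ 1, and for i = 1,…,r let d_i be an s_i-plateaued Boolean function on 𝔽₂ⁿ with 2 ≤ s_i ≤ n−2 whose Walsh support S_{d_i} is a linear subspace of 𝔽₂ⁿ of dimension n−s_i. Assume the subspaces S_{d_1},…,S_{d_r} are independent, i.e. their sum V = S_{d_1} + ⋯ + S_{d_r} is an (internal) direct sum, and that nr − (s₁ + ⋯ + s_r) + t = n for some integer t ≥ 0. Then the function 𝔣 = d₁ ⊕ ⋯ ⊕ d_r satisfies W_𝔣(u) ∈ {2^{(n+t)/2}, −2^{(n+t)/2}} for every u ∈ V and W_𝔣(u) = 0 for every u ∉ V;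 in particular 𝔣 is t-plateaued on 𝔽₂ⁿ, and if t = 0 then 𝔣 is bent. -/
open Finset

namespace Stmt19Aux

lemma chi_add' : ∀ a b : ZMod 2,
    ((-1 : ℤ)) ^ ((a + b).val) = (-1 : ℤ) ^ a.val * (-1 : ℤ) ^ b.val := by decide

lemma chi_add (a b : ZMod 2) :
    ((-1 : ℤ)) ^ ((a + b).val) = (-1 : ℤ) ^ a.val * (-1 : ℤ) ^ b.val := chi_add' a b

lemma chi_one_add' : ∀ c : ZMod 2,
    ((-1 : ℤ)) ^ ((1 + c).val) = -((-1 : ℤ) ^ c.val) := by decide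

lemma chi_one_add (c : ZMod 2) :
    ((-1 : ℤ)) ^ ((1 + c).val) = -((-1 : ℤ) ^ c.val) := chi_one_add' c

lemma chi_sum {ι : Type*} (S : Finset ι) (g : ι → ZMod 2) :
    (-1 : ℤ) ^ ((∑ i ∈ S, g i).val) = ∏ i ∈ S, (-1 : ℤ) ^ ((g i).val) := by
  classical
  induction S using Finset.cons_induction with
  | empty => simp
  | cons a S ha ih => rw [Finset.sum_cons, Finset.prod_cons, chi_add, ih]

variable {m : ℕ}

lemma dotp_add_left (a b x : Fin m → ZMod 2) : dotp (a + b) x = dotp a x + dotp b x := by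
  simp [dotp, add_mul, Finset.sum_add_distrib]

lemma dotp_comm (a b : Fin m → ZMod 2) : dotp a b = dotp b a := by
  simp [dotp, mul_comm]

lemma dotp_add_right (a b x : Fin m → ZMod 2) : dotp x (a + b) = dotp x a + dotp x b := by
  rw [dotp_comm, dotp_add_left, dotp_comm a x, dotp_comm b x]

lemma dotp_sum_left {ι : Type*} (S : Finset ι) (a : ι → Fin m → ZMod 2) (x : Fin m → ZMod 2) :
    dotp (∑ i ∈ S, a i) x = ∑ i ∈ S, dotp (a i) x := by
  classical
  induction S using Finset.cons_induction with
  | empty => simp [dotp]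
  | cons c S hc ih => rw [Finset.sum_cons, Finset.sum_cons, dotp_add_left, ih]

lemma dotp_single (v : Fin m → ZMod 2) (j : Fin m) : dotp v (Pi.single j 1) = v j := by
  simp [dotp, Pi.single_apply]

lemma pi_add_eq_zero_iff (a b : Fin m → ZMod 2) : a + b = 0 ↔ a = b := by
  constructor
  · intro h; funext i
    have h2 := congrFun h i
    have : ∀ c e : ZMod 2, c + e = 0 → c = e := by decide
    exact this _ _ h2
  · rintro rfl; funext i
    have : ∀ c : ZMod 2, c + c = 0 := by decide
    exact this _

lemma orth (v : Fin m → ZMod 2) :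
    ∑ x : Fin m → ZMod 2, (-1 : ℤ) ^ ((dotp v x).val) = if v = 0 then 2 ^ m else 0 := by
  split_ifs with h
  · subst h
    have hz : ∀ x : Fin m → ZMod 2, dotp (0 : Fin m → ZMod 2) x = 0 := by
      intro x; simp [dotp]
    simp only [hz]
    simp [Finset.card_univ]
  · obtain ⟨j, hj⟩ : ∃ j, v j ≠ 0 := by
      by_contra hc; push_neg at hc; exact h (funext hc)
    have hv1 : v j = 1 := by
      have : ∀ a : ZMod 2, a ≠ 0 → a = 1 := by decide
      exact this _ hj
    set e : Fin m → ZMod 2 := Pi.single j (1 : ZMod 2) with he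
    have key : ∀ x, (-1 : ℤ) ^ ((dotp v (e + x)).val) = -((-1 : ℤ) ^ ((dotp v x).val)) := by
      intro x
      have h1 : dotp v (e + x) = 1 + dotp v x := by
        rw [dotp_add_right, dotp_single, hv1]
      rw [h1, chi_one_add]
    have h2 : ∑ x : Fin m → ZMod 2, (-1 : ℤ) ^ ((dotp v x).val)
        = ∑ x : Fin m → ZMod 2, (-1 : ℤ) ^ ((dotp v (e + x)).val) :=
      (Fintype.sum_equiv (Equiv.addLeft e) (fun x => (-1 : ℤ) ^ ((dotp v (e + x)).val))
        (fun x => (-1 : ℤ) ^ ((dotp v x).val)) (fun x => rfl)).symm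
    simp only [key] at h2
    rw [Finset.sum_neg_distrib] at h2
    linarith
  
lemma wht_inv (f : (Fin m → ZMod 2) → ZMod 2) (x : Fin m → ZMod 2) :
    ∑ ω : Fin m → ZMod 2, WHT f ω * (-1 : ℤ) ^ ((dotp ω x).val)
      = 2 ^ m * (-1 : ℤ) ^ ((f x).val) := by
  unfold WHT
  simp_rw [Finset.sum_mul]
  rw [Finset.sum_comm]
  have step : ∀ y : Fin m → ZMod 2,
      ∑ ω : Fin m → ZMod 2, (-1 : ℤ) ^ ((f y + dotp ω y).val) * (-1 : ℤ) ^ ((dotp ω x).val)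
        = (-1 : ℤ) ^ ((f y).val) * (if y + x = 0 then (2 : ℤ) ^ m else 0) := by
    intro y
    have h1 : ∀ ω : Fin m → ZMod 2,
        (-1 : ℤ) ^ ((f y + dotp ω y).val) * (-1 : ℤ) ^ ((dotp ω x).val)
          = (-1 : ℤ) ^ ((f y).val) * (-1 : ℤ) ^ ((dotp (y + x) ω).val) := by
      intro ω
      rw [chi_add, mul_assoc, ← chi_add, ← dotp_add_right, dotp_comm]
    simp_rw [h1]
    rw [← Finset.mul_sum, orth]
  simp_rw [step]
  have hyx : ∀ y : Fin m → ZMod 2, (y + x = 0) = (y = x) := by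
    intro y; rw [pi_add_eq_zero_iff]
  simp_rw [hyx, mul_ite, mul_zero]
  rw [Finset.sum_ite_eq' Finset.univ x]
  simp [mul_comm]

lemma conv {r : ℕ} (d : Fin r → (Fin m → ZMod 2) → ZMod 2) (u : Fin m → ZMod 2) :
    (2 : ℤ) ^ (m * r) * WHT (fun x => ∑ i, d i x) u
      = 2 ^ m * ∑ ω ∈ Finset.univ.filter
          (fun ω : Fin r → Fin m → ZMod 2 => ∑ i, ω i = u),
          ∏ i, WHT (d i) (ω i) := by
  classical
  have lhs1 : (2 : ℤ) ^ (m * r) * WHT (fun x => ∑ i, d i x) u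
      = ∑ x : Fin m → ZMod 2,
          (∏ i, ((2 : ℤ) ^ m * (-1 : ℤ) ^ ((d i x).val))) * (-1 : ℤ) ^ ((dotp u x).val) := by
    unfold WHT
    rw [Finset.mul_sum]
    refine Finset.sum_congr rfl fun x _ => ?_
    rw [chi_add, chi_sum, Finset.prod_mul_distrib, Finset.prod_const, Finset.card_univ,
      Fintype.card_fin, ← pow_mul]
    ring
  rw [lhs1]
  have lhs2 : ∀ x : Fin m → ZMod 2,
      (∏ i, ((2 : ℤ) ^ m * (-1 : ℤ) ^ ((d i x).val)))
        = ∏ i, ∑ ω : Fin m → ZMod 2, WHT (d i) ω * (-1 : ℤ) ^ ((dotp ω x).val) :=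
    fun x => Finset.prod_congr rfl fun i _ => (wht_inv (d i) x).symm
  simp_rw [lhs2, Fintype.prod_sum, Finset.sum_mul]
  rw [Finset.sum_comm]
  have step : ∀ p : Fin r → Fin m → ZMod 2,
      ∑ x : Fin m → ZMod 2,
        (∏ i, WHT (d i) (p i) * (-1 : ℤ) ^ ((dotp (p i) x).val)) * (-1 : ℤ) ^ ((dotp u x).val)
        = (∏ i, WHT (d i) (p i)) * (if (∑ i, p i) = u then (2 : ℤ) ^ m else 0) := by
    intro p
    have h1 : ∀ x : Fin m → ZMod 2,
        (∏ i, WHT (d i) (p i) * (-1 : ℤ) ^ ((dotp (p i) x).val)) * (-1 : ℤ) ^ ((dotp u x).val)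
          = (∏ i, WHT (d i) (p i)) * (-1 : ℤ) ^ ((dotp ((∑ i, p i) + u) x).val) := by
      intro x
      rw [Finset.prod_mul_distrib, ← chi_sum, ← dotp_sum_left, mul_assoc, ← chi_add,
        ← dotp_add_left]
    simp_rw [h1]
    rw [← Finset.mul_sum, orth]
    simp_rw [pi_add_eq_zero_iff]
  simp_rw [step, mul_ite, mul_zero]
  rw [← Finset.sum_filter, ← Finset.sum_mul, mul_comm]



lemma prod_sign {r : ℕ} (c : Fin r → ℤ) (h : ∀ i, c i = 1 ∨ c i = -1) :
    (∏ i, c i) = 1 ∨ (∏ i, c i) = -1 := by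
  classical
  refine Finset.prod_induction c (fun z => z = 1 ∨ z = -1) ?_ (Or.inl rfl) (fun i _ => h i)
  rintro a b (rfl | rfl) (rfl | rfl) <;> norm_num

end Stmt19Aux

open Stmt19Aux in
/-- Generic method B: for `s_i`-plateaued functions `d_i` on `𝔽₂^n`
(`n` even, `2 ≤ s_i ≤ n-2`, `s_i` even) whose Walsh supports are independent linear
subspaces `V i` of dimension `n - s_i`, with `n·r + t = n + ∑ s_i`, the sum
`𝔣 = d₁ ⊕ ⋯ ⊕ d_r` has `W_𝔣(u) = ±2^((n+t)/2)` on `V = ⨆ i, V i` and `W_𝔣(u) = 0`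
off `V`; in particular `𝔣` is `t`-plateaued, and bent when `t = 0`. -/
theorem stmt19 {n r : ℕ} (hne : Even n) (hr : 1 ≤ r)
    (d : Fin r → (Fin n → ZMod 2) → ZMod 2) (s : Fin r → ℕ)
    (hs2 : ∀ i, 2 ≤ s i) (hsn : ∀ i, s i ≤ n - 2) (hse : ∀ i, Even (s i))
    (hplat : ∀ i, IsPlateaued (s i) (d i))
    (V : Fin r → Submodule (ZMod 2) (Fin n → ZMod 2))
    (hdim : ∀ i, Module.finrank (ZMod 2) (V i) = n - s i)
    (hsupp : ∀ i, WSupport (d i) = ↑(V i))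
    (hindep : iSupIndep V)
    (t : ℕ) (ht : n * r + t = n + ∑ i, s i) :
    (∀ u : Fin n → ZMod 2, u ∈ (⨆ i, V i) →
      WHT (fun x => ∑ i, d i x) u = 2 ^ ((n + t) / 2) ∨
      WHT (fun x => ∑ i, d i x) u = -(2 ^ ((n + t) / 2))) ∧
    (∀ u : Fin n → ZMod 2, u ∉ (⨆ i, V i) → WHT (fun x => ∑ i, d i x) u = 0) ∧
    IsPlateaued t (fun x : Fin n → ZMod 2 => ∑ i, d i x) ∧
    (t = 0 → IsBent (fun x : Fin n → ZMod 2 => ∑ i, d i x)) := by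
  classical
  -- basic facts about Walsh values of the d i
  have hW0 : ∀ i (z : Fin n → ZMod 2), z ∉ V i → WHT (d i) z = 0 := by
    intro i z hz
    by_contra h
    exact hz (by rw [← SetLike.mem_coe, ← hsupp i]; exact h)
  have hWmem : ∀ i (z : Fin n → ZMod 2), z ∈ V i →
      WHT (d i) z = 2 ^ ((n + s i) / 2) ∨ WHT (d i) z = -(2 ^ ((n + s i) / 2)) := by
    intro i z hz
    have hne' : WHT (d i) z ≠ 0 := by
      have : z ∈ WSupport (d i) := by rw [hsupp i]; exact hz
      exact this
    rcases hplat i z with h | h | h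
    · exact absurd h hne'
    · left; simpa [Fintype.card_fin] using h
    · right; simpa [Fintype.card_fin] using h
  -- uniqueness of decompositions
  have zero_of_sum : ∀ (x : Fin r → (Fin n → ZMod 2)), (∀ i, x i ∈ V i) →
      (∑ i, x i) = 0 → ∀ j, x j = 0 := by
    intro x hx hsum j
    have hxj : x j = ∑ i ∈ Finset.univ.erase j, x i := by
      have h1 : x j + ∑ i ∈ Finset.univ.erase j, x i = 0 := by
        rw [Finset.add_sum_erase Finset.univ x (Finset.mem_univ j)]; exact hsum
      exact (pi_add_eq_zero_iff _ _).mp h1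
    have h1 : x j ∈ ⨆ (k) (_ : k ≠ j), V k := by
      rw [hxj]
      exact Submodule.sum_mem _ (fun i hi =>
        Submodule.mem_iSup_of_mem i (Submodule.mem_iSup_of_mem (Finset.ne_of_mem_erase hi) (hx i)))
    exact (Submodule.disjoint_def.mp (hindep j)) _ (hx j) h1
  have uniq : ∀ v w : Fin r → (Fin n → ZMod 2), (∀ i, v i ∈ V i) → (∀ i, w i ∈ V i) →
      (∑ i, v i) = (∑ i, w i) → v = w := by
    intro v w hv hw hvw
    have h0 : (∑ i, (v i + w i)) = 0 := by
      rw [Finset.sum_add_distrib, hvw]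
      exact (pi_add_eq_zero_iff _ _).mpr rfl
    funext j
    exact (pi_add_eq_zero_iff _ _).mp
      (zero_of_sum (fun i => v i + w i) (fun i => (V i).add_mem (hv i) (hw i)) h0 j)
  -- existence of decompositions
  have exist : ∀ u : Fin n → ZMod 2, u ∈ (⨆ i, V i) →
      ∃ v : Fin r → (Fin n → ZMod 2), (∀ i, v i ∈ V i) ∧ (∑ i, v i) = u := by
    intro u hu
    rw [Submodule.mem_iSup_iff_exists_finsupp] at hu
    obtain ⟨f, hf, hfs⟩ := hu
    refine ⟨fun i => f i, hf, ?_⟩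
    rw [← hfs, Finsupp.sum_fintype]
    intro i; rfl
  -- arithmetic
  set A := ∑ i, (n + s i) / 2 with hA
  have h2A : 2 * A = n * r + ∑ i, s i := by
    have hstep : ∀ i : Fin r, 2 * ((n + s i) / 2) = n + s i := by
      intro i
      exact Nat.two_mul_div_two_of_even (hne.add (hse i))
    rw [hA, Finset.mul_sum, Finset.sum_congr rfl (fun i _ => hstep i), Finset.sum_add_distrib,
      Finset.sum_const, Finset.card_univ, Fintype.card_fin, smul_eq_mul, Nat.mul_comm r n]
  have hexp : n + A = n * r + (n + t) / 2 := by omega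
  -- main computation, u in the span
  have main_mem : ∀ u : Fin n → ZMod 2, u ∈ (⨆ i, V i) →
      WHT (fun x => ∑ i, d i x) u = 2 ^ ((n + t) / 2) ∨
      WHT (fun x => ∑ i, d i x) u = -(2 ^ ((n + t) / 2)) := by
    intro u hu
    obtain ⟨v, hv, hvu⟩ := exist u hu
    have hsum : (∑ ω ∈ Finset.univ.filter
          (fun ω : Fin r → Fin n → ZMod 2 => ∑ i, ω i = u), ∏ i, WHT (d i) (ω i))
        = ∏ i, WHT (d i) (v i) := by
      refine Finset.sum_eq_single_of_mem v (by simp [hvu]) ?_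
      intro ω hω hne'
      have hωu : (∑ i, ω i) = u := (Finset.mem_filter.mp hω).2
      have hex : ∃ i, ω i ∉ V i := by
        by_contra hc; push_neg at hc
        exact hne' (uniq ω v hc hv (by rw [hωu, hvu]))
      obtain ⟨i, hi⟩ := hex
      exact Finset.prod_eq_zero (Finset.mem_univ i) (hW0 i _ hi)
    set c : Fin r → ℤ := fun i => if WHT (d i) (v i) = 2 ^ ((n + s i) / 2) then 1 else -1 with hc
    have hci : ∀ i, c i = 1 ∨ c i = -1 := by
      intro i; simp only [hc]; split_ifs <;> simp
    have hprod : (∏ i, WHT (d i) (v i)) = (∏ i, c i) * 2 ^ A := by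
      rw [← Finset.prod_pow_eq_pow_sum, ← Finset.prod_mul_distrib]
      refine Finset.prod_congr rfl (fun i _ => ?_)
      rcases hWmem i (v i) (hv i) with h | h
      · simp only [hc, h]; norm_num
      · have hne2 : WHT (d i) (v i) ≠ 2 ^ ((n + s i) / 2) := by
          rw [h]; intro hcon
          have hpos : (0:ℤ) < 2 ^ ((n + s i) / 2) := by positivity
          linarith
        simp only [hc, if_neg hne2, h]; ring
    have heq : (2 : ℤ) ^ (n * r) * WHT (fun x => ∑ i, d i x) u
        = (2 : ℤ) ^ (n * r) * ((∏ i, c i) * 2 ^ ((n + t) / 2)) := by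
      rw [conv d u, hsum, hprod, mul_left_comm, ← pow_add, hexp, pow_add]
      ring
    have hW := mul_left_cancel₀ (a := (2 : ℤ) ^ (n * r)) (by positivity) heq
    rcases prod_sign c hci with h | h
    · left; rw [hW, h, one_mul]
    · right; rw [hW, h]; ring
  -- u outside the span
  have main_not : ∀ u : Fin n → ZMod 2, u ∉ (⨆ i, V i) →
      WHT (fun x => ∑ i, d i x) u = 0 := by
    intro u hu
    have hzero : (∑ ω ∈ Finset.univ.filter
          (fun ω : Fin r → Fin n → ZMod 2 => ∑ i, ω i = u), ∏ i, WHT (d i) (ω i)) = 0 := by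
      refine Finset.sum_eq_zero (fun ω hω => ?_)
      have hωu : (∑ i, ω i) = u := (Finset.mem_filter.mp hω).2
      have hex : ∃ i, ω i ∉ V i := by
        by_contra hc; push_neg at hc
        exact hu (hωu ▸ Submodule.sum_mem _ (fun i _ => Submodule.mem_iSup_of_mem i (hc i)))
      obtain ⟨i, hi⟩ := hex
      exact Finset.prod_eq_zero (Finset.mem_univ i) (hW0 i _ hi)
    have h1 := conv d u
    rw [hzero, mul_zero] at h1
    have h2 : (2 : ℤ) ^ (n * r) ≠ 0 := by positivity
    exact (mul_eq_zero.mp h1).resolve_left h2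
  refine ⟨main_mem, main_not, ?_, ?_⟩
  · intro ω
    by_cases hω : ω ∈ (⨆ i, V i)
    · rcases main_mem ω hω with h | h
      · right; left; rw [h]; simp [Fintype.card_fin]
      · right; right; rw [h]; simp [Fintype.card_fin]
    · left; exact main_not ω hω
  · intro ht0
    -- show the span is everything
    have htop : (⨆ i, V i) = ⊤ := by
      have hsle : ∀ i, s i ≤ n := fun i => le_trans (hsn i) (Nat.sub_le n 2)
      have hΦinj : Function.Injective
          (DFinsupp.lsum ℕ (M := fun i => ↥(V i)) (fun i => (V i).subtype)) :=
        (iSupIndep_iff_dfinsupp_lsum_injective V).mp hindep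
      have hrange := Submodule.iSup_eq_range_dfinsupp_lsum V
      have h1 : Module.finrank (ZMod 2) ↥(⨆ i, V i)
          = Module.finrank (ZMod 2) (Π₀ i, ↥(V i)) := by
        rw [hrange]
        exact (LinearEquiv.ofInjective _ hΦinj).finrank_eq.symm
      have h2 : Module.finrank (ZMod 2) (Π₀ i, ↥(V i))
          = ∑ i, Module.finrank (ZMod 2) ↥(V i) :=
        Module.finrank_directSum _ _
      have hrk : Module.finrank (ZMod 2) ↥(⨆ i, V i) = ∑ i, (n - s i) := by
        rw [h1, h2]
        exact Finset.sum_congr rfl (fun i _ => hdim i)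
      have hsum_n : (∑ i, (n - s i)) = n := by
        have h1 : (∑ i, (n - s i)) + ∑ i, s i = n * r := by
          rw [← Finset.sum_add_distrib]
          have : ∀ i : Fin r, n - s i + s i = n := fun i => Nat.sub_add_cancel (hsle i)
          rw [Finset.sum_congr rfl (fun i _ => this i), Finset.sum_const, Finset.card_univ,
            Fintype.card_fin, smul_eq_mul, Nat.mul_comm r n]
        omega
      apply Submodule.eq_top_of_finrank_eq
      rw [hrk, hsum_n, Module.finrank_fin_fun]
    intro ω
    have hω : ω ∈ (⨆ i, V i) := by rw [htop]; exact Submodule.mem_top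
    rcases main_mem ω hω with h | h <;>
      rw [h] <;> simp [Fintype.card_fin, ht0]
end
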